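/- (Jeulin's lemma.) Let (Z_y)_{y ≥ 0} be a jointly measurable real-valued stochastic process on a probability space such that the law of Z_y is the same for all y ≥ 0, this common law is absolutely continuous with respect to Lebesgue measure, and E[|Z_y|] < ∞. Then, for any σ-finite non-negative Borel measure ν on [0,∞), the integral ∫_0^∞ |Z_y| ν(dy) is finite almost surely if and only if ν([0,∞)) < ∞. -/

import Mathlib

/-!
If `ν([0,∞)) < ∞`, Tonelli and stationarity of the law give
`E ∫ |Z_y| ν(dy) = E|Z_0| · ν([0,∞)) < ∞`. Conversely, since the common law has no atom at `0`,
there is `r > 0` with `P(|Z_y| ≤ r) ≤ 1/2` for every `y`. If `A := ∫ |Z_y| ν(dy) < ∞` a.s.,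
the set `S = {A ≤ n}` has `P(S) > 1/2` for large `n`, and Markov's inequality on `S` gives
`r (P(S) - 1/2) ν([0,∞)) ≤ ∫_S A dP ≤ n`.
-/

open MeasureTheory ProbabilityTheory Set Filter Topology

open scoped ENNReal

theorem exists_pos_measure_closedBall_lt {X : Type*} [MetricSpace X] [MeasurableSpace X]
    [OpensMeasurableSpace X] (μ : Measure X) [IsFiniteMeasure μ] {x : X} (hx : μ {x} = 0)
    {δ : ℝ≥0∞} (hδ : 0 < δ) : ∃ r > 0, μ (Metric.closedBall x r) < δ := by
  have h := tendsto_measure_cthickening_of_isClosed (μ := μ) (s := {x})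
    ⟨1, one_pos, measure_ne_top μ _⟩ isClosed_singleton
  rw [hx] at h
  obtain ⟨r, hr, hlt⟩ := (h.eventually (gt_mem_nhds hδ)).exists_gt
  exact ⟨r, hr, by rwa [← Metric.cthickening_singleton x hr.le]⟩

theorem mul_measure_sub_le_setLIntegral {α : Type*} [MeasurableSpace α] (μ : Measure α)
    {f : α → ℝ≥0∞} (hf : Measurable f) (s : Set α) (c : ℝ≥0∞) :
    c * (μ s - μ {x | f x < c}) ≤ ∫⁻ x in s, f x ∂μ := by
  calc c * (μ s - μ {x | f x < c}) ≤ c * μ.restrict s {x | c ≤ f x} := by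
        gcongr
        rw [Measure.restrict_apply (measurableSet_le measurable_const hf)]
        refine le_measure_sdiff.trans_eq ?_
        congr 1
        ext x
        simp [and_comm]
    _ ≤ ∫⁻ x in s, f x ∂μ := mul_meas_ge_le_lintegral hf c

theorem tendsto_measure_le_natCast_of_ae_lt_top {α : Type*} [MeasurableSpace α]
    {μ : Measure α} {A : α → ℝ≥0∞} (hA : ∀ᵐ x ∂μ, A x < ∞) :
    Tendsto (fun n : ℕ => μ {x | A x ≤ n}) atTop (𝓝 (μ univ)) := by
  have hmono : Monotone fun n : ℕ => {x | A x ≤ n} :=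
    fun m _ hmn x (hx : A x ≤ m) => hx.trans (Nat.mono_cast hmn)
  have hcover : (⋃ n : ℕ, {x | A x ≤ n}) =ᵐ[μ] (univ : Set α) :=
    ae_eq_univ.mpr <| mem_ae_iff.mp <| hA.mono fun x hx =>
      mem_iUnion.mpr ((ENNReal.exists_nat_gt hx.ne).imp fun _ h => h.le)
  rw [← measure_congr hcover]
  exact tendsto_measure_iUnion_atTop hmono

section Tonelli

variable {α Ω : Type*} [MeasurableSpace α] [MeasurableSpace Ω]

theorem measure_univ_lt_top_of_ae_lintegral_lt_top (P : Measure Ω) [IsProbabilityMeasure P]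
    (ν : Measure α) [SFinite ν] {f : α → Ω → ℝ≥0∞} (hf : Measurable (Function.uncurry f))
    {c δ : ℝ≥0∞} (hc : 0 < c) (hδ : δ < 1) (hsmall : ∀ᵐ y ∂ν, P {ω | f y ω < c} ≤ δ)
    (hfin : ∀ᵐ ω ∂P, ∫⁻ y, f y ω ∂ν < ∞) :
    ν univ < ∞ := by
  obtain ⟨n, hn⟩ := ((tendsto_measure_le_natCast_of_ae_lt_top hfin).eventually
    (lt_mem_nhds (by rwa [measure_univ]))).exists
  set S := {ω | ∫⁻ y, f y ω ∂ν ≤ n}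
  have hlower : c * (P S - δ) * ν univ ≤ ∫⁻ ω in S, ∫⁻ y, f y ω ∂ν ∂P :=
    calc c * (P S - δ) * ν univ = ∫⁻ _, c * (P S - δ) ∂ν := (lintegral_const _).symm
      _ ≤ ∫⁻ y, ∫⁻ ω in S, f y ω ∂P ∂ν := lintegral_mono_ae <| hsmall.mono fun y hy =>
          (mul_le_mul_right (tsub_le_tsub_left hy _) c).trans
            (mul_measure_sub_le_setLIntegral P (hf.comp measurable_prodMk_left) S c)
      _ = ∫⁻ ω in S, ∫⁻ y, f y ω ∂ν ∂P := lintegral_lintegral_swap hf.aemeasurable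
  have hupper : ∫⁻ ω in S, ∫⁻ y, f y ω ∂ν ∂P ≤ n :=
    calc ∫⁻ ω in S, ∫⁻ y, f y ω ∂ν ∂P ≤ ∫⁻ _ in S, (n : ℝ≥0∞) ∂P :=
          setLIntegral_mono measurable_const fun _ hω => hω
      _ = n * P S := setLIntegral_const _ _
      _ ≤ n := mul_le_of_le_one_right' prob_le_one
  refine lt_top_iff_ne_top.mpr fun htop => ENNReal.natCast_ne_top n (top_le_iff.mp ?_)
  rw [htop, ENNReal.mul_top (mul_ne_zero hc.ne' (tsub_pos_of_lt hn).ne')] at hlower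
  exact hlower.trans hupper

theorem ae_lintegral_lt_top_of_lintegral_le (μ : Measure Ω) [SFinite μ] (ν : Measure α)
    [SFinite ν] {f : α → Ω → ℝ≥0∞} (hf : Measurable (Function.uncurry f)) {C : ℝ≥0∞}
    (hC : C ≠ ∞) (hbound : ∀ᵐ y ∂ν, ∫⁻ ω, f y ω ∂μ ≤ C) (hν : ν univ ≠ ∞) :
    ∀ᵐ ω ∂μ, ∫⁻ y, f y ω ∂ν < ∞ := by
  refine ae_lt_top hf.lintegral_prod_left' (ne_top_of_le_ne_top (ENNReal.mul_ne_top hC hν) ?_)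
  calc ∫⁻ ω, ∫⁻ y, f y ω ∂ν ∂μ = ∫⁻ y, ∫⁻ ω, f y ω ∂μ ∂ν :=
        (lintegral_lintegral_swap hf.aemeasurable).symm
    _ ≤ ∫⁻ _, C ∂ν := lintegral_mono_ae hbound
    _ = C * ν univ := lintegral_const C

end Tonelli

/-- Jeulin's lemma: if `(Z_y)_{y ≥ 0}` is a jointly measurable process whose one-dimensional
law does not depend on `y ≥ 0`, is absolutely continuous with respect to Lebesgue measure
and is integrable, then for a σ-finite measure `ν`, `∫_0^∞ |Z_y| ν(dy) < ∞` a.s. iff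
`ν([0,∞)) < ∞`. -/
theorem jeulin_lemma {Ω : Type*} [MeasurableSpace Ω] (P : Measure Ω)
    [IsProbabilityMeasure P] (Z : ℝ → Ω → ℝ)
    (hZmeas : Measurable (Function.uncurry Z))
    (hlaw : ∀ y y' : ℝ, 0 ≤ y → 0 ≤ y' → P.map (Z y) = P.map (Z y'))
    (hac : ∀ y : ℝ, 0 ≤ y → P.map (Z y) ≪ volume)
    (hint : ∀ y : ℝ, 0 ≤ y → Integrable (Z y) P)
    (ν : Measure ℝ) [SigmaFinite ν] :
    (∀ᵐ ω ∂P, ∫⁻ y in Ici (0 : ℝ), ENNReal.ofReal |Z y ω| ∂ν < ⊤) ↔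
      ν (Ici (0 : ℝ)) < ⊤ := by
  have hf : Measurable (Function.uncurry fun y ω => ENNReal.ofReal |Z y ω|) :=
    hZmeas.abs.ennreal_ofReal
  have hZ : ∀ y, Measurable (Z y) := fun y => hZmeas.comp measurable_prodMk_left
  have hident : ∀ y, 0 ≤ y → IdentDistrib (Z y) (Z 0) P P := fun y hy =>
    ⟨(hZ y).aemeasurable, (hZ 0).aemeasurable, hlaw y 0 hy le_rfl⟩
  rw [← Measure.restrict_apply_univ]
  constructor
  · intro hfin
    obtain ⟨r, hr, hball⟩ := exists_pos_measure_closedBall_lt (P.map (Z 0))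
      (hac 0 le_rfl Real.volume_singleton) (δ := 2⁻¹) (by norm_num)
    refine measure_univ_lt_top_of_ae_lintegral_lt_top P _ hf (ENNReal.ofReal_pos.mpr hr)
      ENNReal.one_half_lt_one (ae_restrict_of_forall_mem measurableSet_Ici fun y hy => ?_) hfin
    calc P {ω | ENNReal.ofReal |Z y ω| < ENNReal.ofReal r}
        ≤ P (Z y ⁻¹' Metric.closedBall 0 r) := measure_mono fun ω hω => by
          simpa using
            ((ENNReal.ofReal_lt_ofReal_iff_of_nonneg (abs_nonneg _)).mp hω).le
      _ = P.map (Z 0) (Metric.closedBall 0 r) := by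
          rw [(hident y hy).measure_mem_eq Metric.isClosed_closedBall.measurableSet,
            Measure.map_apply (hZ 0) Metric.isClosed_closedBall.measurableSet]
      _ ≤ 2⁻¹ := hball.le
  · intro hν
    refine ae_lintegral_lt_top_of_lintegral_le P _ hf (hint 0 le_rfl).abs.lintegral_lt_top.ne
      (ae_restrict_of_forall_mem measurableSet_Ici fun y hy => ?_) hν.ne
    exact ((hident y hy).comp continuous_abs.measurable.ennreal_ofReal).lintegral_eq.le
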